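/- Fix ε > 0 and a measurable I ⊆ 𝕋^d. Let μ be a probability measure on 𝕋^d × ℝ^d with |E(χ_{I,t}) − |I|| ≤ C_μ t^{-2r} for all t > 0, and let t₀ = ε^{-1/(2r)} (2C_μ)^{1/(2r)}. Then for every t ≥ t₀, the probability (under μ^{⊗N}) that the fraction f_I(X,P,t) of N independent particles in I at time t satisfies |f_I(X,P,t) − |I|| > ε is at most 2 exp(−ε²N/2). -/

import Mathlib

/-!
Each particle contributes the bounded random variable `χ_I(x + t p) ∈ [0, 1]`, and the particles
are independent under `μ^{⊗N}`, so Hoeffding's lemma makes the centred sum sub-Gaussian with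
variance proxy `N/4`, giving `P(|f_I − E χ_{I,t}| ≥ ε/2) ≤ 2 exp(−ε²N/2)`. The choice of `t₀`
makes the decay bound `C_μ t^{-2r}` at most `ε/2`, so a deviation `ε` from `|I|` forces a
deviation `ε/2` from the mean.
-/

open MeasureTheory

def cube (d : ℕ) : Set (Fin d → ℝ) := Set.univ.pi fun _ => Set.Ico (0:ℝ) 1

noncomputable def chiT (d : ℕ) (I : Set (Fin d → ℝ)) (y : Fin d → ℝ) : ℝ :=
  Set.indicator I (fun _ => (1:ℝ)) (fun i => Int.fract (y i))

noncomputable def fracIn (d N : ℕ) (I : Set (Fin d → ℝ)) (t : ℝ)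
    (ω : Fin N → (Fin d → ℝ) × (Fin d → ℝ)) : ℝ :=
  (∑ i, chiT d I ((ω i).1 + t • (ω i).2)) / N

open ProbabilityTheory Real
open scoped NNReal

section Hoeffding

variable {E : Type*} [MeasurableSpace E] {μ : Measure E} [IsProbabilityMeasure μ] {f : E → ℝ}

lemma hasSubgaussianMGF_sum_pi_sub_integral {a b : ℝ} (hf : Measurable f)
    (hab : ∀ x, f x ∈ Set.Icc a b) (N : ℕ) :
    HasSubgaussianMGF (fun ω : Fin N → E ↦ ∑ i, (f (ω i) - ∫ x, f x ∂μ))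
      (N * (‖b - a‖₊ / 2) ^ 2) (Measure.pi fun _ ↦ μ) := by
  have hterm (i : Fin N) : HasSubgaussianMGF (fun ω : Fin N → E ↦ f (ω i) - ∫ x, f x ∂μ)
      ((‖b - a‖₊ / 2) ^ 2) (Measure.pi fun _ ↦ μ) := by
    have h := hasSubgaussianMGF_of_mem_Icc (μ := Measure.pi fun _ : Fin N ↦ μ)
      (X := fun ω ↦ f (ω i)) (hf.comp (measurable_pi_apply i)).aemeasurable
      (ae_of_all _ fun ω ↦ hab (ω i))
    rwa [integral_comp_eval (μ := fun _ ↦ μ) hf.aestronglyMeasurable] at h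
  have hindep : iIndepFun (fun i (ω : Fin N → E) ↦ f (ω i) - ∫ x, f x ∂μ)
      (Measure.pi fun _ ↦ μ) :=
    iIndepFun_pi (X := fun _ x ↦ f x - ∫ x, f x ∂μ) fun _ ↦ (hf.sub_const _).aemeasurable
  simpa using HasSubgaussianMGF.sum_of_iIndepFun hindep (s := Finset.univ) fun i _ ↦ hterm i

lemma ProbabilityTheory.HasSubgaussianMGF.measureReal_abs_ge_le {Ω : Type*}
    [MeasurableSpace Ω] {ν : Measure Ω} {X : Ω → ℝ} {c : ℝ≥0} (h : HasSubgaussianMGF X c ν)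
    {ε : ℝ} (hε : 0 ≤ ε) :
    ν.real {ω | ε ≤ |X ω|} ≤ 2 * exp (-ε ^ 2 / (2 * c)) := by
  have hunion : {ω | ε ≤ |X ω|} = {ω | ε ≤ X ω} ∪ {ω | ε ≤ (-X) ω} := by
    ext ω; simp only [Set.mem_ofPred_eq, Set.mem_union, Pi.neg_apply, le_abs]
  calc ν.real {ω | ε ≤ |X ω|} ≤ ν.real {ω | ε ≤ X ω} + ν.real {ω | ε ≤ (-X) ω} := by
        rw [hunion]; exact measureReal_union_le _ _
    _ ≤ exp (-ε ^ 2 / (2 * c)) + exp (-ε ^ 2 / (2 * c)) :=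
        add_le_add (h.measure_ge_le hε) (h.neg.measure_ge_le hε)
    _ = 2 * exp (-ε ^ 2 / (2 * c)) := by ring

lemma measureReal_abs_sum_div_sub_integral_gt_le {a b : ℝ} (hf : Measurable f)
    (hab : ∀ x, f x ∈ Set.Icc a b) (N : ℕ) {δ : ℝ} (hδ : 0 ≤ δ) :
    (Measure.pi fun _ : Fin N ↦ μ).real {ω | δ < |(∑ i, f (ω i)) / N - ∫ x, f x ∂μ|} ≤
      2 * exp (-2 * N * δ ^ 2 / (b - a) ^ 2) := by
  rcases N.eq_zero_or_pos with rfl | hN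
  · simpa using measureReal_le_one.trans one_le_two
  have hN' : (0 : ℝ) < N := Nat.cast_pos.mpr hN
  have hsub : {ω : Fin N → E | δ < |(∑ i, f (ω i)) / N - ∫ x, f x ∂μ|} ⊆
      {ω | N * δ ≤ |∑ i, (f (ω i) - ∫ x, f x ∂μ)|} := by
    intro ω hω
    have hsum : ∑ i, (f (ω i) - ∫ x, f x ∂μ) = N * ((∑ i, f (ω i)) / N - ∫ x, f x ∂μ) := by
      rw [Finset.sum_sub_distrib]; field_simp; simp
    simp only [Set.mem_ofPred_eq, hsum, abs_mul, Nat.abs_cast] at hω ⊢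
    exact mul_le_mul_of_nonneg_left hω.le hN'.le
  calc _ ≤ (Measure.pi fun _ : Fin N ↦ μ).real {ω | N * δ ≤ |∑ i, (f (ω i) - ∫ x, f x ∂μ)|} :=
        measureReal_mono hsub
    _ ≤ 2 * exp (-(N * δ) ^ 2 / (2 * ↑(N * (‖b - a‖₊ / 2) ^ 2 : ℝ≥0))) :=
        (hasSubgaussianMGF_sum_pi_sub_integral hf hab N).measureReal_abs_ge_le (by positivity)
    _ = 2 * exp (-2 * N * δ ^ 2 / (b - a) ^ 2) := by
        congr 2
        push_cast
        rw [Real.norm_eq_abs, div_pow, sq_abs]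
        rcases eq_or_ne (b - a) 0 with hba | hba
        · simp [hba]
        · field_simp

end Hoeffding

lemma chiT_mem_Icc (d : ℕ) (I : Set (Fin d → ℝ)) (y : Fin d → ℝ) : chiT d I y ∈ Set.Icc 0 1 := by
  unfold chiT
  by_cases hy : (fun i ↦ Int.fract (y i)) ∈ I <;> simp [hy]

lemma measurable_chiT {d : ℕ} {I : Set (Fin d → ℝ)} (hI : MeasurableSet I) :
    Measurable (chiT d I) :=
  (measurable_const.indicator hI).comp <|
    measurable_pi_lambda _ fun i ↦ (measurable_pi_apply i).fract

lemma mul_rpow_neg_le_half_of_le {C r ε t : ℝ} (hC : 0 < C) (hr : 0 < r) (hε : 0 < ε)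
    (ht : ε ^ (-(1 / (2 * r))) * (2 * C) ^ (1 / (2 * r)) ≤ t) :
    C * t ^ (-(2 * r)) ≤ ε / 2 := by
  have h2r : 2 * r ≠ 0 := by positivity
  have ht₀ : (ε ^ (-(1 / (2 * r))) * (2 * C) ^ (1 / (2 * r))) ^ (-(2 * r)) = ε / (2 * C) := by
    rw [mul_rpow (by positivity) (by positivity), ← rpow_mul hε.le, ← rpow_mul (by positivity),
      show -(1 / (2 * r)) * -(2 * r) = 1 by field_simp,
      show 1 / (2 * r) * -(2 * r) = -1 by field_simp, rpow_one, rpow_neg_one, div_eq_mul_inv]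
  calc C * t ^ (-(2 * r)) ≤ C * (ε ^ (-(1 / (2 * r))) * (2 * C) ^ (1 / (2 * r))) ^ (-(2 * r)) :=
        mul_le_mul_of_nonneg_left (rpow_le_rpow_of_nonpos (by positivity) ht (by linarith)) hC.le
    _ = ε / 2 := by rw [ht₀]; field_simp

theorem stmt6_general (d N : ℕ)
    (μ : Measure ((Fin d → ℝ) × (Fin d → ℝ))) [IsProbabilityMeasure μ]
    (Cμ r : ℝ) (hC : 0 < Cμ) (hr : 0 < r)
    (hμ : ∀ J : Set (Fin d → ℝ), J ⊆ cube d → MeasurableSet J → ∀ t : ℝ, 0 < t →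
      |(∫ z, chiT d J (z.1 + t • z.2) ∂μ) - (volume J).toReal| ≤ Cμ * t ^ (-(2 * r)))
    (ε : ℝ) (hε : 0 < ε)
    (I : Set (Fin d → ℝ)) (hI : I ⊆ cube d) (hImeas : MeasurableSet I)
    (t : ℝ) (ht : ε ^ (-(1 / (2 * r))) * (2 * Cμ) ^ (1 / (2 * r)) ≤ t) :
    ((Measure.pi fun _ : Fin N => μ)
        {ω | ε < |fracIn d N I t ω - (volume I).toReal|}).toReal ≤
      2 * Real.exp (-(ε ^ 2) * N / 2) := by
  have htpos : 0 < t := lt_of_lt_of_le (by positivity) ht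
  set χ : (Fin d → ℝ) × (Fin d → ℝ) → ℝ := fun z ↦ chiT d I (z.1 + t • z.2)
  have hχ : Measurable χ :=
    (measurable_chiT hImeas).comp (measurable_fst.add (measurable_snd.const_smul t))
  have hmean : |∫ z, χ z ∂μ - (volume I).toReal| ≤ ε / 2 :=
    (hμ I hI hImeas t htpos).trans (mul_rpow_neg_le_half_of_le hC hr hε ht)
  have hsub : {ω | ε < |fracIn d N I t ω - (volume I).toReal|} ⊆
      {ω | ε / 2 < |(∑ i, χ (ω i)) / N - ∫ z, χ z ∂μ|} := fun ω (hω : ε < _) ↦ by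
    have := abs_sub_le (fracIn d N I t ω) (∫ z, χ z ∂μ) (volume I).toReal
    show ε / 2 < |fracIn d N I t ω - ∫ z, χ z ∂μ|
    linarith
  calc _ ≤ (Measure.pi fun _ : Fin N ↦ μ).real
        {ω | ε / 2 < |(∑ i, χ (ω i)) / N - ∫ z, χ z ∂μ|} := measureReal_mono hsub
    _ ≤ 2 * exp (-2 * N * (ε / 2) ^ 2 / (1 - 0) ^ 2) :=
        measureReal_abs_sum_div_sub_integral_gt_le hχ (fun z ↦ chiT_mem_Icc d I _) N
          (by positivity)
    _ = 2 * exp (-(ε ^ 2) * N / 2) := by ring_nf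

/-- for `t ≥ t₀ = ε^{-1/2r}(2C_μ)^{1/2r}`, the probability that the
fraction of particles in `I` deviates from `|I|` by more than `ε` is at most
`2 exp(−ε²N/2)`. -/
theorem stmt6 (d N : ℕ) (hN : 1 ≤ N)
    (μ : Measure ((Fin d → ℝ) × (Fin d → ℝ))) [IsProbabilityMeasure μ]
    (Cμ r : ℝ) (hC : 0 < Cμ) (hr : 0 < r)
    (hμ : ∀ J : Set (Fin d → ℝ), J ⊆ cube d → MeasurableSet J → ∀ t : ℝ, 0 < t →
      |(∫ z, chiT d J (z.1 + t • z.2) ∂μ) - (volume J).toReal| ≤ Cμ * t ^ (-(2 * r)))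
    (ε : ℝ) (hε : 0 < ε)
    (I : Set (Fin d → ℝ)) (hI : I ⊆ cube d) (hImeas : MeasurableSet I)
    (t : ℝ) (ht : ε ^ (-(1 / (2 * r))) * (2 * Cμ) ^ (1 / (2 * r)) ≤ t) :
    ((Measure.pi fun _ : Fin N => μ)
        {ω | ε < |fracIn d N I t ω - (volume I).toReal|}).toReal ≤
      2 * Real.exp (-(ε ^ 2) * N / 2) :=
  stmt6_general d N μ Cμ r hC hr hμ ε hε I hI hImeas t ht
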